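/- Let β ∈ (0,1] and α > −1. Suppose θ ∈ C([0,T); H^s(ℝ²)) ∩ L^∞(0,T; L¹(ℝ²)), with s > 1+β, is a solution of the gSQG equation that is locally self-similar in a ball B_ρ(x₀) ⊂ ℝ² with scaling parameter α and profile Θ that is β-Hölder continuous on ℝ². Fix p ≥ 1 and suppose that for some r ≥ p+1 one has Θ ∈ L^r(ℝ²) (i.e. ∫_{|y| ≤ L} |Θ(y)|^r dy ≲ 1 for all large L). If α = β − 1 + 2/r, then Θ ≡ 0 on ℝ². -/

import Mathlib

/-! The profile `Θ` is uniformly continuous and `|Θ|^r` is integrable, so `Θ` tends to `0` at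
infinity; if `Θ ≠ 0` it therefore attains a nonzero global extremum at some `y`. For `t` close to
`T` the point `x = x₀ + (T-t)^{1/(1+α)} y` lies in the ball of self-similarity and is a spatial
extremum of `θ(·,t)`, so the transport equation gives `∂ₜθ(x,t) = 0`. On the other hand
`τ ↦ (T-τ)^e θ(x,τ) = Θ((T-τ)^{-1/(1+α)} (x - x₀))`, with `e = (1+α-β)/(1+α)`, is extremal at
`τ = t`, so its derivative `-e (T-t)^{e-1} θ(x,t)` vanishes. At the endpoint `α = β - 1 + 2/r`
we have `1 + α - β = 2/r ≠ 0`, hence `θ(x,t) = 0`, that is `Θ y = 0`. -/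

open MeasureTheory Filter Metric Set
open scoped Topology FourierTransform RealInnerProductSpace

noncomputable section

/-- The plane `ℝ²`. -/
abbrev R2 : Type := EuclideanSpace ℝ (Fin 2)

/-- The rotation by 90 degrees: `(a, b)^⊥ = (-b, a)`. -/
def perp (v : R2) : R2 := (EuclideanSpace.equiv (Fin 2) ℝ).symm ![-(v 1), v 0]

/-- The kernel `K_β(z) = z^⊥ / |z|^{2+β}` of the gSQG constitutive law. -/
def gsqgKernel (β : ℝ) (z : R2) : R2 := ‖z‖ ^ (-(2 + β)) • perp z

/-- Fourier-side integrand defining the `H^s(ℝ²)` norm: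
`(1 + |ξ|²)^s |f̂(ξ)|²`. -/
def fourierWeight (s : ℝ) (f : R2 → ℝ) (ξ : R2) : ℝ :=
  (1 + ‖ξ‖ ^ 2) ^ s * ‖𝓕 (fun x => (f x : ℂ)) ξ‖ ^ 2

/-- Membership in the Sobolev space `H^s(ℝ²)`. -/
def MemHs (s : ℝ) (f : R2 → ℝ) : Prop :=
  MemLp f 2 volume ∧ Integrable (fourierWeight s f)

/-- `θ ∈ C([0,T); H^s(ℝ²)) ∩ L^∞(0,T; L¹(ℝ²))`. -/
def RegularityClass (s T : ℝ) (θ : R2 → ℝ → ℝ) : Prop :=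
  (∀ t ∈ Ico (0:ℝ) T, MemHs s (fun x => θ x t)) ∧
  (∀ t₀ ∈ Ico (0:ℝ) T,
    Tendsto (fun t => ∫ ξ, fourierWeight s (fun x => θ x t - θ x t₀) ξ)
      (𝓝[Ico (0:ℝ) T] t₀) (𝓝 0)) ∧
  (∃ M : ℝ, ∀ t ∈ Ioo (0:ℝ) T, Integrable (fun x => θ x t) ∧ (∫ x, |θ x t|) ≤ M)

/-- `θ` is a solution of the gSQG equation on `ℝ² × (0,T)`: there is a velocity
field `u`, given (with a constant `C_β` depending only on `β`) by the principal
value integral `u(x,t) = C_β P.V. ∫ K_β(x-y) θ(y,t) dy`, such that the transport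
equation `∂ₜθ + (u·∇)θ = 0` holds. -/
def IsGSQGSolution (β T : ℝ) (θ : R2 → ℝ → ℝ) : Prop :=
  ∃ (u : R2 → ℝ → R2) (Cβ : ℝ),
    (∀ t ∈ Ioo (0:ℝ) T, ∀ x : R2,
      Tendsto (fun ε : ℝ =>
          ∫ y in {y : R2 | ε < dist x y}, (Cβ * θ y t) • gsqgKernel β (x - y))
        (𝓝[>] (0:ℝ)) (𝓝 (u x t))) ∧
    (∀ t ∈ Ioo (0:ℝ) T, ∀ x : R2,
      HasDerivAt (fun τ => θ x τ) (-(⟪u x t, gradient (fun z => θ z t) x⟫)) t)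

/-- `θ` is locally self-similar in the ball `B_ρ(x₀)` with scaling parameter `α`
and profile `Θ`:
`θ(x,t) = (T-t)^{-(1+α-β)/(1+α)} Θ((x-x₀)(T-t)^{-1/(1+α)})` on `B_ρ(x₀) × (0,T)`. -/
def LocallySelfSimilar (β α T ρ : ℝ) (x₀ : R2) (θ : R2 → ℝ → ℝ) (Θ : R2 → ℝ) : Prop :=
  ∀ t ∈ Ioo (0:ℝ) T, ∀ x ∈ ball x₀ ρ,
    θ x t = (T - t) ^ (-((1 + α - β) / (1 + α))) *
      Θ (((T - t) ^ (-(1 / (1 + α)))) • (x - x₀))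

/-- `Θ` is `β`-Hölder continuous on `ℝ²`. -/
def HolderBeta (β : ℝ) (Θ : R2 → ℝ) : Prop :=
  ∃ C : ℝ, 0 ≤ C ∧ ∀ x y : R2, |Θ x - Θ y| ≤ C * ‖x - y‖ ^ β

theorem HolderBeta.holderWith {β : ℝ} {Θ : R2 → ℝ} (h : HolderBeta β Θ) (hβ : 0 ≤ β) :
    ∃ C : NNReal, HolderWith C β.toNNReal Θ := by
  obtain ⟨C, hC, hΘ⟩ := h
  refine ⟨C.toNNReal, fun x y => ?_⟩
  rw [edist_dist, edist_dist, Real.coe_toNNReal β hβ,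
    ENNReal.ofReal_rpow_of_nonneg dist_nonneg hβ, ← ENNReal.ofReal.eq_def,
    ← ENNReal.ofReal_mul hC, Real.dist_eq, dist_eq_norm]
  exact ENNReal.ofReal_le_ofReal (hΘ x y)

theorem integrable_of_setIntegral_closedBall_le {X : Type*} [PseudoMetricSpace X] [ProperSpace X]
    [MeasurableSpace X] [OpensMeasurableSpace X] {μ : Measure X} {g : X → ℝ}
    (hg : LocallyIntegrable g μ) (hg0 : 0 ≤ g) (x : X) {C : ℝ}
    (hC : ∀ᶠ L in atTop, ∫ y in closedBall x L, g y ∂μ ≤ C) : Integrable g μ :=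
  (aecover_closedBall tendsto_id).integrable_of_integral_bounded_of_nonneg_ae C
    (fun L => hg.integrableOn_isCompact (isCompact_closedBall x L)) (ae_of_all _ hg0) hC

theorem tendsto_setIntegral_compl_closedBall {E : Type*} [NormedAddCommGroup E]
    [MeasurableSpace E] [OpensMeasurableSpace E] {μ : Measure E} {g : E → ℝ}
    (hg : Integrable g μ) :
    Tendsto (fun n : ℕ => ∫ x in (closedBall (0 : E) n)ᶜ, g x ∂μ) atTop (𝓝 0) := by
  have hempty : ⋂ n : ℕ, (closedBall (0 : E) n)ᶜ = ∅ := by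
    refine eq_empty_of_forall_notMem fun x hx => ?_
    obtain ⟨n, hn⟩ := exists_nat_ge ‖x‖
    exact mem_iInter.1 hx n (by simpa using hn)
  simpa [hempty] using tendsto_setIntegral_of_antitone
    (s := fun n : ℕ => (closedBall (0 : E) n)ᶜ) (fun n => measurableSet_closedBall.compl)
    (fun m n hmn => compl_subset_compl.2 (closedBall_subset_closedBall (by exact_mod_cast hmn)))
    ⟨0, hg.integrableOn⟩

theorem UniformContinuous.tendsto_cocompact_zero_of_integrable_rpow {E : Type*}
    [NormedAddCommGroup E] [ProperSpace E] [MeasurableSpace E] [BorelSpace E] {μ : Measure E}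
    [μ.IsAddHaarMeasure] {f : E → ℝ} {r : ℝ} (hf : UniformContinuous f) (hr : 0 ≤ r)
    (hint : Integrable (fun x => |f x| ^ r) μ) : Tendsto f (cocompact E) (𝓝 0) := by
  rw [← cobounded_eq_cocompact, ← comap_norm_atTop, Metric.tendsto_nhds]
  intro c hc
  obtain ⟨δ, hδ, hclose⟩ := Metric.uniformContinuous_iff.1 hf (c / 2) (half_pos hc)
  set v := (c / 2) ^ r * μ.real (ball (0 : E) δ)
  have hv : 0 < v := mul_pos (by positivity) <|
    ENNReal.toReal_pos (measure_ball_pos μ 0 hδ).ne' measure_ball_lt_top.ne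
  -- near a point where `|f| ≥ c`, uniform continuity keeps `|f| ≥ c / 2` on a ball of fixed radius
  have hbump : ∀ y, c ≤ |f y| → v ≤ ∫ x in ball y δ, |f x| ^ r ∂μ := by
    intro y hy
    have hlow : ∀ x ∈ ball y δ, (c / 2) ^ r ≤ |f x| ^ r := fun x hx => by
      have hclose' := hclose (mem_ball.1 hx)
      rw [Real.dist_eq, abs_sub_comm] at hclose'
      have := abs_sub_abs_le_abs_sub (f y) (f x)
      exact Real.rpow_le_rpow (by positivity) (by linarith) hr
    have := setIntegral_ge_of_const_le measurableSet_ball measure_ball_lt_top.ne hlow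
      hint.integrableOn
    rwa [measureReal_def, Measure.addHaar_ball_center, smul_eq_mul, mul_comm] at this
  obtain ⟨n, hn⟩ :=
    ((tendsto_setIntegral_compl_closedBall hint).eventually (gt_mem_nhds hv)).exists
  rw [eventually_comap, eventually_atTop]
  refine ⟨n + δ, fun R hR y hy => ?_⟩
  by_contra! hfy
  rw [dist_zero_right, Real.norm_eq_abs] at hfy
  have hsub : ball y δ ⊆ (closedBall (0 : E) n)ᶜ := fun x hx hx' => by
    rw [mem_ball, dist_eq_norm] at hx
    rw [mem_closedBall, dist_zero_right] at hx'
    linarith [norm_sub_norm_le y x, norm_sub_rev y x]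
  have := setIntegral_mono_set hint.integrableOn (ae_of_all _ fun x => by positivity)
    hsub.eventuallyLE
  linarith [hbump y hfy]

def SolvesTransport (T : ℝ) (u : R2 → ℝ → R2) (θ : R2 → ℝ → ℝ) : Prop :=
  ∀ t ∈ Ioo (0:ℝ) T, ∀ x : R2,
    HasDerivAt (fun τ => θ x τ) (-(⟪u x t, gradient (fun z => θ z t) x⟫)) t

theorem SolvesTransport.hasDerivAt_zero_of_isLocalExtr {T t : ℝ} {u : R2 → ℝ → R2}
    {θ : R2 → ℝ → ℝ} {x : R2} (h : SolvesTransport T u θ) (ht : t ∈ Ioo 0 T)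
    (hx : IsLocalExtr (fun z => θ z t) x) : HasDerivAt (fun τ => θ x τ) 0 t := by
  simpa [gradient, hx.fderiv_eq_zero] using h t ht x

namespace LocallySelfSimilar

variable {β α T ρ t : ℝ} {x₀ y : R2} {θ : R2 → ℝ → ℝ} {Θ : R2 → ℝ}

theorem apply_add_smul (hss : LocallySelfSimilar β α T ρ x₀ θ Θ) (ht : t ∈ Ioo 0 T)
    (hx : x₀ + (T - t) ^ (1 / (1 + α)) • y ∈ ball x₀ ρ) :
    θ (x₀ + (T - t) ^ (1 / (1 + α)) • y) t = (T - t) ^ (-((1 + α - β) / (1 + α))) * Θ y := by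
  rw [hss t ht _ hx, add_sub_cancel_left, smul_smul, ← Real.rpow_add (sub_pos.2 ht.2),
    neg_add_cancel, Real.rpow_zero, one_smul]

theorem isLocalExtr_space (hss : LocallySelfSimilar β α T ρ x₀ θ Θ) (ht : t ∈ Ioo 0 T)
    (hx : x₀ + (T - t) ^ (1 / (1 + α)) • y ∈ ball x₀ ρ) (hy : IsExtrOn Θ univ y) :
    IsLocalExtr (fun z => θ z t) (x₀ + (T - t) ^ (1 / (1 + α)) • y) := by
  set x := x₀ + (T - t) ^ (1 / (1 + α)) • y
  set a := (T - t) ^ (-((1 + α - β) / (1 + α)))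
  set g : R2 → R2 := fun z => (T - t) ^ (-(1 / (1 + α))) • (z - x₀)
  have hgx : g x = y := by
    simp only [g, x, add_sub_cancel_left, smul_smul, ← Real.rpow_add (sub_pos.2 ht.2),
      neg_add_cancel, Real.rpow_zero, one_smul]
  have hextr : IsExtrFilter ((a * ·) ∘ Θ ∘ g) (𝓝 x) x :=
    ((hgx ▸ hy).comp_tendsto (tendsto_principal.2 (.of_forall fun _ => mem_univ _))).comp_mono
      (monotone_mul_left_of_nonneg (Real.rpow_nonneg (sub_pos.2 ht.2).le _))
  refine hextr.congr ?_ (hss t ht x hx).symm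
  filter_upwards [isOpen_ball.mem_nhds hx] with z hz using (hss t ht z hz).symm

theorem isLocalExtr_time (hss : LocallySelfSimilar β α T ρ x₀ θ Θ) (ht : t ∈ Ioo 0 T)
    (hx : x₀ + (T - t) ^ (1 / (1 + α)) • y ∈ ball x₀ ρ) (hy : IsExtrOn Θ univ y) :
    IsLocalExtr (fun τ => (T - τ) ^ ((1 + α - β) / (1 + α)) *
      θ (x₀ + (T - t) ^ (1 / (1 + α)) • y) τ) t := by
  set x := x₀ + (T - t) ^ (1 / (1 + α)) • y
  set g : ℝ → R2 := fun τ => (T - τ) ^ (-(1 / (1 + α))) • (x - x₀)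
  have hgt : g t = y := by
    simp only [g, x, add_sub_cancel_left, smul_smul, ← Real.rpow_add (sub_pos.2 ht.2),
      neg_add_cancel, Real.rpow_zero, one_smul]
  have hextr : IsExtrFilter (Θ ∘ g) (𝓝 t) t :=
    (hgt ▸ hy).comp_tendsto (tendsto_principal.2 (.of_forall fun _ => mem_univ _))
  have heq : Θ ∘ g =ᶠ[𝓝 t] fun τ => (T - τ) ^ ((1 + α - β) / (1 + α)) * θ x τ := by
    filter_upwards [isOpen_Ioo.mem_nhds ht] with τ hτ
    rw [hss τ hτ x hx, ← mul_assoc, ← Real.rpow_add (sub_pos.2 hτ.2), add_neg_cancel,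
      Real.rpow_zero, one_mul]
    rfl
  exact hextr.congr heq heq.eq_of_nhds

theorem eq_zero_of_isExtrOn {u : R2 → ℝ → R2} (hss : LocallySelfSimilar β α T ρ x₀ θ Θ)
    (htr : SolvesTransport T u θ) (hT : 0 < T) (hρ : 0 < ρ) (hα : 0 < 1 + α)
    (hαβ : 1 + α - β ≠ 0) (hy : IsExtrOn Θ univ y) : Θ y = 0 := by
  set e := (1 + α - β) / (1 + α)
  have hnear : ∀ᶠ τ in 𝓝[<] T, x₀ + (T - τ) ^ (1 / (1 + α)) • y ∈ ball x₀ ρ := by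
    have hcont : ContinuousAt (fun τ => x₀ + (T - τ) ^ (1 / (1 + α)) • y) T :=
      continuousAt_const.add <| (((continuousAt_const.sub continuousAt_id).rpow_const
        (Or.inr (by positivity))).smul continuousAt_const)
    have hlim := hcont.tendsto
    rw [sub_self, Real.zero_rpow (by positivity), zero_smul, add_zero] at hlim
    exact nhdsWithin_le_nhds (hlim.eventually (isOpen_ball.mem_nhds (mem_ball_self hρ)))
  have hIoo : ∀ᶠ τ in 𝓝[<] T, τ ∈ Ioo 0 T := Ioo_mem_nhdsLT hT
  obtain ⟨t, ht, hx⟩ := (hIoo.and hnear).exists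
  set x := x₀ + (T - t) ^ (1 / (1 + α)) • y
  have hθ : HasDerivAt (fun τ => θ x τ) 0 t :=
    htr.hasDerivAt_zero_of_isLocalExtr ht (hss.isLocalExtr_space ht hx hy)
  have hweight : HasDerivAt (fun τ => (T - τ) ^ e) (-1 * e * (T - t) ^ (e - 1)) t :=
    ((hasDerivAt_id' t).const_sub T).rpow_const (Or.inl (sub_pos.2 ht.2).ne')
  have hcrit := (hss.isLocalExtr_time ht hx hy).hasDerivAt_eq_zero (hweight.mul hθ)
  rw [hss.apply_add_smul ht hx] at hcrit
  have he : e ≠ 0 := div_ne_zero hαβ hα.ne'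
  have hne : ∀ q : ℝ, (T - t) ^ q ≠ 0 := fun q => (Real.rpow_pos_of_pos (sub_pos.2 ht.2) q).ne'
  simpa [he, hne] using hcrit

end LocallySelfSimilar

theorem Continuous.eq_zero_of_forall_isExtrOn {X : Type*} [TopologicalSpace X] {f : X → ℝ}
    (hf : Continuous f) (hlim : Tendsto f (cocompact X) (𝓝 0))
    (hextr : ∀ y, IsExtrOn f univ y → f y = 0) (x : X) : f x = 0 := by
  rcases lt_trichotomy (f x) 0 with hneg | hzero | hpos
  · obtain ⟨y, hy⟩ :=
      hf.exists_forall_le' x ((hlim.eventually (lt_mem_nhds hneg)).mono fun _ => le_of_lt)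
    linarith [hy x, hextr y (.inl fun z _ => hy z)]
  · exact hzero
  · obtain ⟨y, hy⟩ :=
      hf.exists_forall_ge' x ((hlim.eventually (gt_mem_nhds hpos)).mono fun _ => le_of_lt)
    linarith [hy x, hextr y (.inr fun z _ => hy z)]

theorem gsqg_locally_self_similar_beta_le_one_endpoint_general
    (β α T ρ p r : ℝ) (x₀ : R2) (θ : R2 → ℝ → ℝ) (Θ : R2 → ℝ)
    (hβ : β ∈ Ioc (0:ℝ) 1) (hα : -1 < α) (hT : 0 < T) (hρ : 0 < ρ)
    (hsol : IsGSQGSolution β T θ)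
    (hss : LocallySelfSimilar β α T ρ x₀ θ Θ) (hΘHolder : HolderBeta β Θ)
    (hp : 1 ≤ p) (hr : p + 1 ≤ r)
    (hΘr : ∃ C L₀ : ℝ, ∀ L ≥ L₀, (∫ y in closedBall (0:R2) L, |Θ y| ^ r) ≤ C)
    (hαeq : α = β - 1 + 2 / r) :
    ∀ y, Θ y = 0 := by
  obtain ⟨u, -, -, htransport⟩ := hsol
  obtain ⟨C, hC⟩ := hΘHolder.holderWith hβ.1.le
  have hΘ : UniformContinuous Θ := hC.uniformContinuous (by simpa using hβ.1)
  have hr0 : 0 < r := by linarith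
  obtain ⟨I, L₀, hI⟩ := hΘr
  have hint : Integrable (fun y => |Θ y| ^ r) :=
    integrable_of_setIntegral_closedBall_le
      (hΘ.continuous.abs.rpow_const fun _ => .inr hr0.le).locallyIntegrable
      (fun _ => by positivity) 0 (eventually_atTop.2 ⟨L₀, hI⟩)
  have hαβ : 1 + α - β ≠ 0 := by
    rw [hαeq]
    ring_nf
    positivity
  exact hΘ.continuous.eq_zero_of_forall_isExtrOn (hΘ.tendsto_cocompact_zero_of_integrable_rpow
    hr0.le hint) fun y hy => hss.eq_zero_of_isExtrOn htransport hT hρ (by linarith) hαβ hy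

/-- **Remark 2.5** (case `β ∈ (0,1]`, endpoint `α = β - 1 + 2/r` with `γ = 0`):
if the β-Hölder continuous profile satisfies `Θ ∈ L^r(ℝ²)` (its `L^r` integrals
over balls are bounded), then at the endpoint value `α = β - 1 + 2/r` the
profile vanishes identically. -/
theorem gsqg_locally_self_similar_beta_le_one_endpoint
    (β α T ρ s p r : ℝ) (x₀ : R2) (θ : R2 → ℝ → ℝ) (Θ : R2 → ℝ)
    (hβ : β ∈ Ioc (0:ℝ) 1) (hα : -1 < α) (hT : 0 < T) (hρ : 0 < ρ) (hs : 1 + β < s)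
    (hreg : RegularityClass s T θ) (hsol : IsGSQGSolution β T θ)
    (hss : LocallySelfSimilar β α T ρ x₀ θ Θ) (hΘHolder : HolderBeta β Θ)
    (hp : 1 ≤ p) (hr : p + 1 ≤ r)
    (hΘr : ∃ C L₀ : ℝ, ∀ L ≥ L₀, (∫ y in closedBall (0:R2) L, |Θ y| ^ r) ≤ C)
    (hαeq : α = β - 1 + 2 / r) :
    ∀ y, Θ y = 0 :=
  gsqg_locally_self_similar_beta_le_one_endpoint_general β α T ρ p r x₀ θ Θ hβ hα hT hρ hsol hss
    hΘHolder hp hr hΘr hαeq
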